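/- Utility of output-perturbed gradient descent for convex losses with exponential noise (Theorem 3, ε-DP case): Let f_1,...,f_n be differentiable functions from ℝ^d to ℝ, each convex, β-smooth, and L-Lipschitz, and let F(w) = (1/n)∑_i f_i(w) with minimizer ŵ satisfying ‖ŵ‖ ≤ D. Run gradient descent w_{t+1} = w_t − (1/β)∇F(w_t) for T ≥ 1 steps starting from w_0 = 0. Let Δ = 3LT/(βn), let ε > 0, and let z be a random vector in ℝ^d with density proportional to exp(−ε‖z‖₂/Δ), independent of everything else. Then E[F(w_T + z)] − F(ŵ) ≤ 2βD²/T + 9T²L²d(d+1)/(2βn²ε²). -/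

import Mathlib

/-!
Gradient descent with step `1 / β` on a convex `β`-smooth objective `F` satisfies the potential
inequality `T (F w_T - F y) + β/2 ‖w_T - y‖² ≤ β/2 ‖w_0 - y‖²`, hence has optimization error at most
`β ‖ŵ‖² / (2T)`. The noise is the exponential tilt of Lebesgue measure by `z ↦ -c ‖z‖`,
`c = ε / Δ`. It is symmetric, so the linear term of the smoothness expansion
`F (x + z) ≤ F x + ⟪∇F x, z⟫ + β/2 ‖z‖²` averages to zero, and in polar coordinates
`E ‖z‖² = Γ(d + 2) / (Γ(d) c²) = d (d + 1) / c²`.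
-/

open Real MeasureTheory RealInnerProductSpace

section GradientDescent

variable {E : Type*} [NormedAddCommGroup E] [InnerProductSpace ℝ E] [CompleteSpace E]
  {G : E → ℝ} {β : ℝ}

theorem ConvexOn.inner_gradient_le_sub (hG : ConvexOn ℝ Set.univ G) {x : E}
    (hx : DifferentiableAt ℝ G x) (y : E) : ⟪gradient G x, y - x⟫ ≤ G y - G x := by
  have hline : HasDerivAt (G ∘ AffineMap.lineMap (k := ℝ) x y) ⟪gradient G x, y - x⟫ 0 := by
    rw [inner_gradient_left]
    have hGx : HasFDerivAt G (fderiv ℝ G x) (AffineMap.lineMap (k := ℝ) x y 0) := by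
      simpa using hx.hasFDerivAt
    exact hGx.comp_hasDerivAt 0 AffineMap.hasDerivAt_lineMap
  have hconv : ConvexOn ℝ Set.univ (G ∘ AffineMap.lineMap (k := ℝ) x y) :=
    hG.comp_affineMap _
  simpa [slope_def_field] using
    hconv.le_slope_of_hasDerivAt (Set.mem_univ 0) (Set.mem_univ 1) one_pos hline

theorem apply_sub_one_div_smul_gradient_le
    (hsmooth : ∀ u v, G u ≤ G v + ⟪gradient G v, u - v⟫ + β / 2 * ‖u - v‖ ^ 2) (hβ : 0 < β)
    (x : E) :
    G (x - (1 / β) • gradient G x) ≤ G x - ‖gradient G x‖ ^ 2 / (2 * β) := by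
  have h := hsmooth (x - (1 / β) • gradient G x) x
  rw [sub_sub_cancel_left, inner_neg_right, real_inner_smul_right, real_inner_self_eq_norm_sq,
    norm_neg, norm_smul, Real.norm_of_nonneg (by positivity)] at h
  have : β / 2 * (1 / β * ‖gradient G x‖) ^ 2 - 1 / β * ‖gradient G x‖ ^ 2
      = -(‖gradient G x‖ ^ 2 / (2 * β)) := by field_simp; ring
  linarith

theorem apply_sub_one_div_smul_gradient_sub_le
    (hsmooth : ∀ u v, G u ≤ G v + ⟪gradient G v, u - v⟫ + β / 2 * ‖u - v‖ ^ 2) (hβ : 0 < β)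
    (hG : ConvexOn ℝ Set.univ G) {x : E} (hx : DifferentiableAt ℝ G x) (y : E) :
    G (x - (1 / β) • gradient G x) - G y ≤
      β / 2 * (‖x - y‖ ^ 2 - ‖x - (1 / β) • gradient G x - y‖ ^ 2) := by
  have hdesc := apply_sub_one_div_smul_gradient_le hsmooth hβ x
  have hfirst := hG.inner_gradient_le_sub hx y
  have hdist : ‖x - (1 / β) • gradient G x - y‖ ^ 2 =
      ‖x - y‖ ^ 2 - 2 * (1 / β) * ⟪gradient G x, x - y⟫ + (1 / β) ^ 2 * ‖gradient G x‖ ^ 2 := by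
    rw [sub_right_comm, norm_sub_sq_real, real_inner_smul_right, norm_smul,
      Real.norm_of_nonneg (by positivity), real_inner_comm]
    ring
  have hinner : ⟪gradient G x, y - x⟫ = -⟪gradient G x, x - y⟫ := by
    rw [← inner_neg_right, neg_sub]
  have hpotential : β / 2 * (‖x - y‖ ^ 2 - ‖x - (1 / β) • gradient G x - y‖ ^ 2) =
      ⟪gradient G x, x - y⟫ - ‖gradient G x‖ ^ 2 / (2 * β) := by
    rw [hdist]; field_simp; ring
  linarith

theorem nat_mul_sub_add_norm_sq_le_of_gradientDescent
    (hsmooth : ∀ u v, G u ≤ G v + ⟪gradient G v, u - v⟫ + β / 2 * ‖u - v‖ ^ 2) (hβ : 0 < β)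
    (hG : ConvexOn ℝ Set.univ G) (hdiff : Differentiable ℝ G) {w : ℕ → E}
    (hw : ∀ t, w (t + 1) = w t - (1 / β) • gradient G (w t)) (y : E) (T : ℕ) :
    T * (G (w T) - G y) + β / 2 * ‖w T - y‖ ^ 2 ≤ β / 2 * ‖w 0 - y‖ ^ 2 := by
  induction T with
  | zero => simp
  | succ T ih =>
    have hstep := apply_sub_one_div_smul_gradient_sub_le hsmooth hβ hG (hdiff (w T)) y
    have hdesc := apply_sub_one_div_smul_gradient_le hsmooth hβ (w T)
    rw [← hw] at hstep hdesc
    have hmono : (T : ℝ) * (G (w (T + 1)) - G y) ≤ T * (G (w T) - G y) := by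
      gcongr
      linarith [show 0 ≤ ‖gradient G (w T)‖ ^ 2 / (2 * β) by positivity]
    push_cast
    linarith

theorem sub_le_of_gradientDescent
    (hsmooth : ∀ u v, G u ≤ G v + ⟪gradient G v, u - v⟫ + β / 2 * ‖u - v‖ ^ 2) (hβ : 0 < β)
    (hG : ConvexOn ℝ Set.univ G) (hdiff : Differentiable ℝ G) {w : ℕ → E}
    (hw : ∀ t, w (t + 1) = w t - (1 / β) • gradient G (w t)) (y : E) {T : ℕ} (hT : 0 < T) :
    G (w T) - G y ≤ β * ‖w 0 - y‖ ^ 2 / (2 * T) := by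
  have h := nat_mul_sub_add_norm_sq_le_of_gradientDescent hsmooth hβ hG hdiff hw y T
  rw [le_div_iff₀ (by positivity)]
  nlinarith [sq_nonneg ‖w T - y‖]

end GradientDescent

theorem MeasureTheory.Measure.inv_lintegral_smul_withDensity_eq_tilted {α : Type*}
    [MeasurableSpace α] {μ : Measure α} {f : α → ℝ} (hf : Integrable (fun x => exp (f x)) μ) :
    (∫⁻ x, ENNReal.ofReal (exp (f x)) ∂μ)⁻¹ • μ.withDensity (fun x => ENNReal.ofReal (exp (f x)))
      = μ.tilted f := by
  rcases eq_zero_or_neZero μ with rfl | hμ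
  · simp
  have hZ := integral_exp_pos hf
  rw [← ofReal_integral_eq_lintegral_ofReal hf (.of_forall fun x => (exp_pos _).le),
    ← withDensity_smul' _ _ (by simpa using hZ), Measure.tilted]
  congr with x
  rw [Pi.smul_apply, smul_eq_mul, ← ENNReal.ofReal_inv_of_pos hZ,
    ← ENNReal.ofReal_mul (by positivity), div_eq_inv_mul]

section RadialExponential

variable {E : Type*} [NormedAddCommGroup E] [NormedSpace ℝ E] [FiniteDimensional ℝ E]
  [MeasurableSpace E] [BorelSpace E] (μ : Measure E) [μ.IsAddHaarMeasure] {c : ℝ}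

theorem integral_norm_pow_mul_exp_neg_mul_norm [Nontrivial E] (hc : 0 < c) (k : ℕ) :
    ∫ x, ‖x‖ ^ k * exp (-(c * ‖x‖)) ∂μ =
      Module.finrank ℝ E * μ.real (Metric.ball 0 1) *
        (Gamma (Module.finrank ℝ E + k) / c ^ (Module.finrank ℝ E + k)) := by
  set d := Module.finrank ℝ E
  have hd : 0 < d := Module.finrank_pos
  rw [integral_fun_norm_addHaar μ (fun r => r ^ k * exp (-(c * r)))]
  have hradial : ∫ r in Set.Ioi (0 : ℝ), r ^ (d - 1) • (r ^ k * exp (-(c * r))) =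
      ∫ r in Set.Ioi (0 : ℝ), r ^ ((d + k : ℝ) - 1) * exp (-(c * r)) := by
    refine setIntegral_congr_fun measurableSet_Ioi fun r (hr : 0 < r) => ?_
    rw [smul_eq_mul, ← mul_assoc, ← pow_add, ← rpow_natCast]
    congr 2
    push_cast [Nat.cast_sub hd]
    ring
  rw [hradial, integral_rpow_mul_exp_neg_mul_Ioi (by positivity) hc, nsmul_eq_mul, smul_eq_mul,
    div_rpow zero_le_one hc.le, one_rpow, ← rpow_natCast c (d + k)]
  push_cast
  ring

theorem integrable_norm_pow_mul_exp_neg_mul_norm (hc : 0 < c) (k : ℕ) :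
    Integrable (fun x => ‖x‖ ^ k * exp (-(c * ‖x‖))) μ := by
  rcases subsingleton_or_nontrivial E with hE | hE
  · exact (integrable_const (0 ^ k * exp (-(c * 0)) : ℝ)).congr
      (.of_forall fun x => by simp [Subsingleton.elim x 0])
  -- the radial formula holds without integrability, so its positive value forces integrability
  refine Integrable.of_integral_ne_zero ?_
  rw [integral_norm_pow_mul_exp_neg_mul_norm μ hc k]
  have hd : 0 < Module.finrank ℝ E := Module.finrank_pos
  have hball : 0 < μ.real (Metric.ball 0 1) :=
    ENNReal.toReal_pos (Metric.measure_ball_pos μ 0 one_pos).ne' measure_ball_lt_top.ne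
  positivity

theorem integrable_exp_neg_mul_norm (hc : 0 < c) :
    Integrable (fun x => exp (-(c * ‖x‖))) μ := by
  simpa using integrable_norm_pow_mul_exp_neg_mul_norm μ hc 0

theorem integrable_norm_pow_tilted_neg_mul_norm (hc : 0 < c) (k : ℕ) :
    Integrable (fun x => ‖x‖ ^ k) (μ.tilted fun x => -(c * ‖x‖)) := by
  rw [integrable_tilted_iff (integrable_exp_neg_mul_norm μ hc)]
  simpa only [smul_eq_mul, mul_comm] using integrable_norm_pow_mul_exp_neg_mul_norm μ hc k

theorem integrable_id_tilted_neg_mul_norm (hc : 0 < c) :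
    Integrable (fun x => x) (μ.tilted fun x => -(c * ‖x‖)) :=
  (integrable_norm_iff aestronglyMeasurable_id).mp <| by
    simpa using integrable_norm_pow_tilted_neg_mul_norm μ hc 1

theorem integral_id_tilted_neg_mul_norm : ∫ x, x ∂(μ.tilted fun x => -(c * ‖x‖)) = 0 := by
  rw [integral_tilted]
  set h : E → E := fun x => (exp (-(c * ‖x‖)) / ∫ y, exp (-(c * ‖y‖)) ∂μ) • x
  have hodd : ∫ x, h (-x) ∂μ = -∫ x, h x ∂μ := by
    simp only [h, norm_neg, smul_neg, integral_neg]
  rw [integral_neg_eq_self, eq_neg_iff_add_eq_zero, ← two_smul ℝ] at hodd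
  exact (smul_eq_zero.mp hodd).resolve_left two_ne_zero

theorem integral_norm_sq_tilted_neg_mul_norm (hc : 0 < c) :
    ∫ x, ‖x‖ ^ 2 ∂(μ.tilted fun x => -(c * ‖x‖)) =
      Module.finrank ℝ E * (Module.finrank ℝ E + 1) / c ^ 2 := by
  rcases subsingleton_or_nontrivial E with hE | hE
  · simp [Subsingleton.elim _ (0 : E), Module.finrank_zero_of_subsingleton]
  have hmass := integral_norm_pow_mul_exp_neg_mul_norm μ hc 0
  have hsecond := integral_norm_pow_mul_exp_neg_mul_norm μ hc 2
  simp only [pow_zero, one_mul, Nat.cast_zero, add_zero] at hmass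
  push_cast at hsecond
  set d := Module.finrank ℝ E
  have hd : (0 : ℝ) < d := by exact_mod_cast Module.finrank_pos
  have hmass_pos : 0 < ∫ x, exp (-(c * ‖x‖)) ∂μ :=
    integral_exp_pos (integrable_exp_neg_mul_norm μ hc)
  have hGamma : Gamma (d + 2) = d * (d + 1) * Gamma d := by
    rw [show (d : ℝ) + 2 = d + 1 + 1 by ring, Gamma_add_one (by positivity),
      Gamma_add_one hd.ne']
    ring
  simp_rw [integral_tilted, smul_eq_mul, div_mul_eq_mul_div, integral_div, mul_comm (exp _)]
  rw [div_eq_iff hmass_pos.ne', hsecond, hmass, hGamma]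
  field_simp
  ring

end RadialExponential

theorem integral_add_le_of_abs_sub_inner_le {E : Type*} [NormedAddCommGroup E]
    [InnerProductSpace ℝ E] [CompleteSpace E] [MeasurableSpace E] [BorelSpace E]
    {ν : Measure E} [IsProbabilityMeasure ν] {G : E → ℝ} (hG : Continuous G) {x g : E} {β : ℝ}
    (hsmooth : ∀ z, |G (x + z) - G x - ⟪g, z⟫| ≤ β / 2 * ‖z‖ ^ 2)
    (hint : Integrable (fun z => z) ν) (hint2 : Integrable (fun z => ‖z‖ ^ 2) ν)
    (hmean : ∫ z, z ∂ν = 0) :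
    ∫ z, G (x + z) ∂ν ≤ G x + β / 2 * ∫ z, ‖z‖ ^ 2 ∂ν := by
  have hlin : Integrable (fun z => G x + ⟪g, z⟫) ν := (integrable_const _).add (hint.const_inner g)
  have hquad : Integrable (fun z => G x + ⟪g, z⟫ + β / 2 * ‖z‖ ^ 2) ν :=
    hlin.add (hint2.const_mul _)
  have hGint : Integrable (fun z => G (x + z)) ν := by
    refine (hlin.abs.add (hint2.const_mul (β / 2))).mono'
      (hG.comp (continuous_const_add x)).aestronglyMeasurable (.of_forall fun z => ?_)
    have := abs_sub_abs_le_abs_sub (G (x + z)) (G x + ⟪g, z⟫)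
    rw [← sub_sub] at this
    show |G (x + z)| ≤ |G x + ⟪g, z⟫| + β / 2 * ‖z‖ ^ 2
    linarith [hsmooth z]
  calc ∫ z, G (x + z) ∂ν ≤ ∫ z, (G x + ⟪g, z⟫ + β / 2 * ‖z‖ ^ 2) ∂ν :=
        integral_mono hGint hquad fun z => by linarith [(abs_le.mp (hsmooth z)).2]
    _ = G x + β / 2 * ∫ z, ‖z‖ ^ 2 ∂ν := by
        rw [integral_add hlin (hint2.const_mul _), integral_add (integrable_const _)
          (hint.const_inner g), integral_inner hint, hmean, inner_zero_right,
          integral_const_mul]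
        simp

theorem integral_add_tilted_neg_mul_norm_le {E : Type*} [NormedAddCommGroup E]
    [InnerProductSpace ℝ E] [FiniteDimensional ℝ E] [MeasurableSpace E] [BorelSpace E]
    (μ : Measure E) [μ.IsAddHaarMeasure] {c β : ℝ} (hc : 0 < c) {G : E → ℝ} (hG : Continuous G)
    {x g : E} (hsmooth : ∀ z, |G (x + z) - G x - ⟪g, z⟫| ≤ β / 2 * ‖z‖ ^ 2) :
    ∫ z, G (x + z) ∂(μ.tilted fun z => -(c * ‖z‖)) ≤
      G x + β / 2 * (Module.finrank ℝ E * (Module.finrank ℝ E + 1) / c ^ 2) := by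
  have := isProbabilityMeasure_tilted (integrable_exp_neg_mul_norm μ hc)
  rw [← integral_norm_sq_tilted_neg_mul_norm μ hc]
  exact integral_add_le_of_abs_sub_inner_le hG hsmooth (integrable_id_tilted_neg_mul_norm μ hc)
    (integrable_norm_pow_tilted_neg_mul_norm μ hc 2) (integral_id_tilted_neg_mul_norm μ)

theorem convexOn_mean {E : Type*} [AddCommGroup E] [Module ℝ E] {n : ℕ}
    {f : Fin n → E → ℝ} (hconv : ∀ i, ConvexOn ℝ Set.univ (f i)) :
    ConvexOn ℝ Set.univ (fun w => (1 / (n : ℝ)) * ∑ i, f i w) := by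
  have hsum : ConvexOn ℝ Set.univ (∑ i, f i) :=
    Finset.sum_induction _ (ConvexOn ℝ Set.univ) (fun _ _ => ConvexOn.add)
      (convexOn_const 0 convex_univ) fun i _ => hconv i
  simpa [Finset.sum_apply] using hsum.smul (c := 1 / (n : ℝ)) (by positivity)

section EmpiricalRisk

variable {E : Type*} [NormedAddCommGroup E] [InnerProductSpace ℝ E] [CompleteSpace E]
  {n : ℕ} {f : Fin n → E → ℝ}

theorem inner_gradient_mean (hdiff : ∀ i, Differentiable ℝ (f i)) (v u : E) :
    ⟪gradient (fun w => (1 / (n : ℝ)) * ∑ i, f i w) v, u⟫ =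
      (1 / (n : ℝ)) * ∑ i, ⟪gradient (f i) v, u⟫ := by
  simp only [inner_gradient_left]
  rw [fderiv_const_mul (by fun_prop), fderiv_fun_sum fun i _ => hdiff i v]
  simp

theorem abs_mean_sub_inner_gradient_le (hn : 0 < n) (hdiff : ∀ i, Differentiable ℝ (f i))
    {β : ℝ} (hsmooth : ∀ i u v, |f i u - f i v - ⟪gradient (f i) v, u - v⟫| ≤ β / 2 * ‖u - v‖ ^ 2)
    (u v : E) :
    |(1 / (n : ℝ)) * ∑ i, f i u - (1 / (n : ℝ)) * ∑ i, f i v -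
        ⟪gradient (fun w => (1 / (n : ℝ)) * ∑ i, f i w) v, u - v⟫| ≤ β / 2 * ‖u - v‖ ^ 2 := by
  rw [inner_gradient_mean hdiff, ← mul_sub, ← mul_sub, ← Finset.sum_sub_distrib,
    ← Finset.sum_sub_distrib, abs_mul, abs_of_pos (by positivity)]
  calc (1 / (n : ℝ)) * |∑ i, (f i u - f i v - ⟪gradient (f i) v, u - v⟫)|
      ≤ (1 / (n : ℝ)) * ∑ _i : Fin n, β / 2 * ‖u - v‖ ^ 2 := by
        gcongr
        exact (Finset.abs_sum_le_sum_abs _ _).trans (Finset.sum_le_sum fun i _ => hsmooth i u v)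
    _ = β / 2 * ‖u - v‖ ^ 2 := by
        rw [Finset.sum_const, Finset.card_univ, Fintype.card_fin, nsmul_eq_mul]
        field_simp

end EmpiricalRisk

theorem utility_output_perturbed_gd_convex_eps_dp_general
    (d n T : ℕ) (hn : 0 < n) (hT : 1 ≤ T) (β L D ε : ℝ)
    (hβ : 0 < β) (hL : 0 < L) (hε : 0 < ε)
    (f : Fin n → EuclideanSpace ℝ (Fin d) → ℝ)
    (hdiff : ∀ i, Differentiable ℝ (f i))
    (hconv : ∀ i, ConvexOn ℝ Set.univ (f i))
    (hsmooth : ∀ i u v, |f i u - f i v - ⟪gradient (f i) v, u - v⟫| ≤ β / 2 * ‖u - v‖ ^ 2)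
    (F : EuclideanSpace ℝ (Fin d) → ℝ)
    (hF : F = fun w => (1 / (n : ℝ)) * ∑ i, f i w)
    (what : EuclideanSpace ℝ (Fin d)) (hwhat : ‖what‖ ≤ D)
    (w : ℕ → EuclideanSpace ℝ (Fin d)) (hw0 : w 0 = 0)
    (hw : ∀ t, w (t + 1) = w t - (1 / β) • gradient F (w t))
    (Δ : ℝ) (hΔ : Δ = 3 * L * T / (β * n))
    (ν : Measure (EuclideanSpace ℝ (Fin d)))
    (hν : ν = (∫⁻ z : EuclideanSpace ℝ (Fin d),
        ENNReal.ofReal (Real.exp (-(ε * ‖z‖) / Δ)))⁻¹ •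
      volume.withDensity (fun z => ENNReal.ofReal (Real.exp (-(ε * ‖z‖) / Δ)))) :
    (∫ z, F (w T + z) ∂ν) - F what ≤
      2 * β * D ^ 2 / T + 9 * T ^ 2 * L ^ 2 * (d * (d + 1)) / (2 * β * n ^ 2 * ε ^ 2) := by
  have hΔpos : 0 < Δ := by rw [hΔ]; positivity
  have hc : 0 < ε / Δ := by positivity
  simp only [neg_div, mul_div_right_comm] at hν
  rw [Measure.inv_lintegral_smul_withDensity_eq_tilted (integrable_exp_neg_mul_norm _ hc)] at hν
  subst hν
  have hsmoothF : ∀ u v, |F u - F v - ⟪gradient F v, u - v⟫| ≤ β / 2 * ‖u - v‖ ^ 2 :=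
    hF ▸ abs_mean_sub_inner_gradient_le hn hdiff hsmooth
  have hdiffF : Differentiable ℝ F := by rw [hF]; fun_prop
  have hgd := sub_le_of_gradientDescent (fun u v => by linarith [(abs_le.mp (hsmoothF u v)).2])
    hβ (hF ▸ convexOn_mean hconv) hdiffF hw what hT
  have hnoise := integral_add_tilted_neg_mul_norm_le volume hc hdiffF.continuous
    fun z => by simpa only [add_sub_cancel_left] using hsmoothF (w T + z) (w T)
  rw [finrank_euclideanSpace_fin] at hnoise
  rw [hw0, zero_sub, norm_neg] at hgd
  have hT' : (0 : ℝ) < T := by exact_mod_cast hT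
  have hopt : β * ‖what‖ ^ 2 / (2 * T) ≤ 2 * β * D ^ 2 / T := by
    rw [div_le_div_iff₀ (by positivity) hT']
    nlinarith [pow_le_pow_left₀ (norm_nonneg what) hwhat 2, sq_nonneg D, mul_pos hβ hT']
  have hvar : β / 2 * (d * (d + 1) / (ε / Δ) ^ 2) =
      9 * T ^ 2 * L ^ 2 * (d * (d + 1)) / (2 * β * n ^ 2 * ε ^ 2) := by
    rw [hΔ]
    field_simp
    ring
  linarith

/-- Utility of output-perturbed gradient descent for convex losses with
exponential noise (Theorem 3, ε-DP case). -/
theorem utility_output_perturbed_gd_convex_eps_dp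
    (d n T : ℕ) (hn : 0 < n) (hT : 1 ≤ T) (β L D ε : ℝ)
    (hβ : 0 < β) (hL : 0 < L) (hε : 0 < ε)
    (f : Fin n → EuclideanSpace ℝ (Fin d) → ℝ)
    (hdiff : ∀ i, Differentiable ℝ (f i))
    (hconv : ∀ i, ConvexOn ℝ Set.univ (f i))
    (hsmooth : ∀ i u v, |f i u - f i v - ⟪gradient (f i) v, u - v⟫| ≤ β / 2 * ‖u - v‖ ^ 2)
    (hlip : ∀ i u v, |f i u - f i v| ≤ L * ‖u - v‖)
    (F : EuclideanSpace ℝ (Fin d) → ℝ)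
    (hF : F = fun w => (1 / (n : ℝ)) * ∑ i, f i w)
    (what : EuclideanSpace ℝ (Fin d)) (hmin : ∀ x, F what ≤ F x) (hwhat : ‖what‖ ≤ D)
    (w : ℕ → EuclideanSpace ℝ (Fin d)) (hw0 : w 0 = 0)
    (hw : ∀ t, w (t + 1) = w t - (1 / β) • gradient F (w t))
    (Δ : ℝ) (hΔ : Δ = 3 * L * T / (β * n))
    (ν : Measure (EuclideanSpace ℝ (Fin d)))
    (hν : ν = (∫⁻ z : EuclideanSpace ℝ (Fin d),
        ENNReal.ofReal (Real.exp (-(ε * ‖z‖) / Δ)))⁻¹ •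
      volume.withDensity (fun z => ENNReal.ofReal (Real.exp (-(ε * ‖z‖) / Δ)))) :
    (∫ z, F (w T + z) ∂ν) - F what ≤
      2 * β * D ^ 2 / T + 9 * T ^ 2 * L ^ 2 * (d * (d + 1)) / (2 * β * n ^ 2 * ε ^ 2) :=
  utility_output_perturbed_gd_convex_eps_dp_general d n T hn hT β L D ε hβ hL hε f hdiff hconv
    hsmooth F hF what hwhat w hw0 hw Δ hΔ ν hν
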